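/- Let X = ⨆_{λ∈Λ} G_λ be a multiple conjugation quandle, R a ring, M a left R-module, and (f₁, f₂) an MCQ Alexander pair of maps f₁, f₂ : X × X → R. Then the multiple conjugation quandle X̃(f₁,f₂) = ⨆_{λ∈Λ} (G_λ × M), with operations (x,u) ◁ (y,v) = (x ◁ y, f₁(x,y)u + f₂(x,y)v) and (a,u)(b,v) = (ab, u + f₁(a,a⁻¹)v) on each G_λ × M, is an extension of X: the projection pr_X : X̃(f₁,f₂) → X sending (x,u) to x is a surjective MCQ homomorphism whose fibers all have the same cardinality. -/

import Mathlib

universe u v w x u' v'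

/-- The raw data of a disjoint union of "groups" `G l` (with multiplication `mul`,
identity `one` and inversion `inv` on each component) together with a binary
operation `op` on the disjoint union `Σ l, G l`. -/
structure MCQData (Λ : Type u) (G : Λ → Type v) where
  mul : ∀ l : Λ, G l → G l → G l
  one : ∀ l : Λ, G l
  inv : ∀ l : Λ, G l → G l
  op  : (Σ l, G l) → (Σ l, G l) → (Σ l, G l)

namespace MCQData

variable {Λ : Type u} {G : Λ → Type v}

/-- Each component `G l` is a group with respect to the given data. -/
def IsGroupData (D : MCQData Λ G) : Prop :=
  (∀ (l : Λ) (a b c : G l), D.mul l (D.mul l a b) c = D.mul l a (D.mul l b c)) ∧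
  (∀ (l : Λ) (a : G l), D.mul l (D.one l) a = a) ∧
  (∀ (l : Λ) (a : G l), D.mul l a (D.one l) = a) ∧
  (∀ (l : Λ) (a : G l), D.mul l (D.inv l a) a = D.one l) ∧
  (∀ (l : Λ) (a : G l), D.mul l a (D.inv l a) = D.one l)

/-- `D` is a multiple conjugation quandle (MCQ): each component is a group,
the operation restricts to conjugation on each component, and the axioms of an
MCQ hold.  In the last axiom, `a ◁ x` and `b ◁ x` lie in a common component
`G m` and `(ab) ◁ x = (a ◁ x)(b ◁ x)` there. -/
def IsMCQ (D : MCQData Λ G) : Prop :=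
  D.IsGroupData ∧
  (∀ (l : Λ) (a b : G l),
    D.op ⟨l, a⟩ ⟨l, b⟩ = ⟨l, D.mul l (D.mul l (D.inv l b) a) b⟩) ∧
  (∀ (x : Σ l, G l) (l : Λ), D.op x ⟨l, D.one l⟩ = x) ∧
  (∀ (x : Σ l, G l) (l : Λ) (a b : G l),
    D.op x ⟨l, D.mul l a b⟩ = D.op (D.op x ⟨l, a⟩) ⟨l, b⟩) ∧
  (∀ x y z : Σ l, G l, D.op (D.op x y) z = D.op (D.op x z) (D.op y z)) ∧
  (∀ (l : Λ) (a b : G l) (x : Σ l, G l), ∃ (m : Λ) (a' b' : G m),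
    D.op ⟨l, a⟩ x = ⟨m, a'⟩ ∧ D.op ⟨l, b⟩ x = ⟨m, b'⟩ ∧
    D.op ⟨l, D.mul l a b⟩ x = ⟨m, D.mul m a' b'⟩)

/-- `(f₁, f₂)` is an MCQ Alexander pair for the MCQ `D` with values in the ring `R`. -/
def IsMCQAlexanderPair (D : MCQData Λ G) {R : Type w} [Ring R]
    (f₁ f₂ : (Σ l, G l) → (Σ l, G l) → R) : Prop :=
  (∀ (l : Λ) (a b : G l),
    f₁ ⟨l, a⟩ ⟨l, b⟩ + f₂ ⟨l, a⟩ ⟨l, b⟩ = f₁ ⟨l, a⟩ ⟨l, D.mul l (D.inv l a) b⟩) ∧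
  (∀ (l : Λ) (a b : G l) (x : Σ l, G l), f₁ ⟨l, a⟩ x = f₁ ⟨l, b⟩ x) ∧
  (∀ (l : Λ) (a b : G l) (x : Σ l, G l),
    f₂ ⟨l, D.mul l a b⟩ x =
      f₂ ⟨l, a⟩ x + f₁ (D.op ⟨l, b⟩ x) (D.op ⟨l, D.inv l a⟩ x) * f₂ ⟨l, b⟩ x) ∧
  (∀ (x : Σ l, G l) (l : Λ), f₁ x ⟨l, D.one l⟩ = 1) ∧
  (∀ (x : Σ l, G l) (l : Λ) (a b : G l),
    f₁ x ⟨l, D.mul l a b⟩ = f₁ (D.op x ⟨l, a⟩) ⟨l, b⟩ * f₁ x ⟨l, a⟩) ∧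
  (∀ (x : Σ l, G l) (l : Λ) (a b : G l),
    f₂ x ⟨l, D.mul l a b⟩ = f₁ (D.op x ⟨l, a⟩) ⟨l, b⟩ * f₂ x ⟨l, a⟩) ∧
  (∀ x y z : Σ l, G l, f₁ (D.op x y) z * f₁ x y = f₁ (D.op x z) (D.op y z) * f₁ x z) ∧
  (∀ x y z : Σ l, G l, f₁ (D.op x y) z * f₂ x y = f₂ (D.op x z) (D.op y z) * f₁ y z) ∧
  (∀ x y z : Σ l, G l, f₂ (D.op x y) z =
    f₁ (D.op x z) (D.op y z) * f₂ x z + f₂ (D.op x z) (D.op y z) * f₂ y z)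

/-- An MCQ homomorphism: `φ` preserves the operation `◁`, and for `a, b` in a common
component, `φ a`, `φ b` lie in a common component and `φ (ab) = (φ a)(φ b)`. -/
def IsMCQHom {Λ' : Type u'} {G' : Λ' → Type v'} (D : MCQData Λ G)
    (D' : MCQData Λ' G') (φ : (Σ l, G l) → (Σ l', G' l')) : Prop :=
  (∀ x y : Σ l, G l, φ (D.op x y) = D'.op (φ x) (φ y)) ∧
  (∀ (l : Λ) (a b : G l), ∃ (m : Λ') (a' b' : G' m),
    φ ⟨l, a⟩ = ⟨m, a'⟩ ∧ φ ⟨l, b⟩ = ⟨m, b'⟩ ∧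
    φ ⟨l, D.mul l a b⟩ = ⟨m, D'.mul m a' b'⟩)

/-- Conditions (0-i)--(0-iv) for the maps `f₃, f₄ : ⨆ (G l × G l) → R`. -/
def Conds0 (D : MCQData Λ G) {R : Type w} [Ring R]
    (f₃ f₄ : ∀ l : Λ, G l → G l → R) : Prop :=
  (∀ (l : Λ) (a b : G l), IsUnit (f₃ l a b) ∧ IsUnit (f₄ l a b)) ∧
  (∀ (l : Λ) (a b c : G l), f₃ l (D.mul l a b) c * f₃ l a b = f₃ l a (D.mul l b c)) ∧
  (∀ (l : Λ) (a b c : G l),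
    f₃ l (D.mul l a b) c * f₄ l a b = f₄ l a (D.mul l b c) * f₃ l b c) ∧
  (∀ (l : Λ) (a b c : G l), f₄ l (D.mul l a b) c = f₄ l a (D.mul l b c) * f₄ l b c)

/-- Conditions (0-i)--(4-iii) for the quadruple `(f₁, f₂, f₃, f₄)`.
In conditions (4-i)--(4-iii), the decompositions `a ◁ x = ⟨m, a'⟩` and
`b ◁ x = ⟨m, b'⟩` express that `a ◁ x` and `b ◁ x` lie in a common component `G m`. -/
def Conds (D : MCQData Λ G) {R : Type w} [Ring R]
    (f₁ f₂ : (Σ l, G l) → (Σ l, G l) → R) (f₃ f₄ : ∀ l : Λ, G l → G l → R) : Prop :=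
  Conds0 D f₃ f₄ ∧
  (∀ (l : Λ) (a b : G l),
    f₁ ⟨l, a⟩ ⟨l, b⟩ = f₄ l (D.inv l b) (D.mul l a b) * f₃ l a b) ∧
  (∀ (l : Λ) (a b : G l),
    f₂ ⟨l, a⟩ ⟨l, b⟩ =
      -(f₃ l (D.inv l b) (D.mul l a b) * f₄ l (D.inv l b) (D.one l) * f₃ l b (D.inv l b)) +
        f₄ l (D.inv l b) (D.mul l a b) * f₄ l a b) ∧
  (∀ (x : Σ l, G l) (l : Λ), f₁ x ⟨l, D.one l⟩ = 1) ∧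
  (∀ (x : Σ l, G l) (l : Λ) (a b : G l),
    f₁ x ⟨l, D.mul l a b⟩ = f₁ (D.op x ⟨l, a⟩) ⟨l, b⟩ * f₁ x ⟨l, a⟩) ∧
  (∀ (x : Σ l, G l) (l : Λ) (a b : G l),
    f₂ x ⟨l, D.mul l a b⟩ * f₃ l a b = f₁ (D.op x ⟨l, a⟩) ⟨l, b⟩ * f₂ x ⟨l, a⟩) ∧
  (∀ (x : Σ l, G l) (l : Λ) (a b : G l),
    f₂ x ⟨l, D.mul l a b⟩ * f₄ l a b = f₂ (D.op x ⟨l, a⟩) ⟨l, b⟩) ∧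
  (∀ x y z : Σ l, G l, f₁ (D.op x y) z * f₁ x y = f₁ (D.op x z) (D.op y z) * f₁ x z) ∧
  (∀ x y z : Σ l, G l, f₁ (D.op x y) z * f₂ x y = f₂ (D.op x z) (D.op y z) * f₁ y z) ∧
  (∀ x y z : Σ l, G l, f₂ (D.op x y) z =
    f₁ (D.op x z) (D.op y z) * f₂ x z + f₂ (D.op x z) (D.op y z) * f₂ y z) ∧
  (∀ (l : Λ) (a b : G l) (x : Σ l, G l) (m : Λ) (a' b' : G m),
    D.op ⟨l, a⟩ x = ⟨m, a'⟩ → D.op ⟨l, b⟩ x = ⟨m, b'⟩ →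
      f₁ ⟨l, D.mul l a b⟩ x * f₃ l a b = f₃ m a' b' * f₁ ⟨l, a⟩ x) ∧
  (∀ (l : Λ) (a b : G l) (x : Σ l, G l) (m : Λ) (a' b' : G m),
    D.op ⟨l, a⟩ x = ⟨m, a'⟩ → D.op ⟨l, b⟩ x = ⟨m, b'⟩ →
      f₁ ⟨l, D.mul l a b⟩ x * f₄ l a b = f₄ m a' b' * f₁ ⟨l, b⟩ x) ∧
  (∀ (l : Λ) (a b : G l) (x : Σ l, G l) (m : Λ) (a' b' : G m),
    D.op ⟨l, a⟩ x = ⟨m, a'⟩ → D.op ⟨l, b⟩ x = ⟨m, b'⟩ →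
      f₂ ⟨l, D.mul l a b⟩ x = f₃ m a' b' * f₂ ⟨l, a⟩ x + f₄ m a' b' * f₂ ⟨l, b⟩ x)

/-- The multiplication `(a,u)(b,v) = (ab, f₃(a,b)u + f₄(a,b)v)` on `G l × M`. -/
def quadMul (D : MCQData Λ G) {R : Type w} [Ring R] (f₃ f₄ : ∀ l : Λ, G l → G l → R)
    (M : Type x) [AddCommGroup M] [Module R M] (l : Λ) (p q : G l × M) : G l × M :=
  (D.mul l p.1 q.1, f₃ l p.1 q.1 • p.2 + f₄ l p.1 q.1 • q.2)

/-- The operation `(x,u) ◁ (y,v) = (x ◁ y, f₁(x,y)u + f₂(x,y)v)` on `⨆ (G l × M)`. -/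
def quadOp (D : MCQData Λ G) {R : Type w} [Ring R]
    (f₁ f₂ : (Σ l, G l) → (Σ l, G l) → R) (M : Type x) [AddCommGroup M] [Module R M]
    (z w : Σ l, G l × M) : Σ l, G l × M :=
  ⟨(D.op ⟨z.1, z.2.1⟩ ⟨w.1, w.2.1⟩).1,
    ((D.op ⟨z.1, z.2.1⟩ ⟨w.1, w.2.1⟩).2,
      f₁ ⟨z.1, z.2.1⟩ ⟨w.1, w.2.1⟩ • z.2.2 + f₂ ⟨z.1, z.2.1⟩ ⟨w.1, w.2.1⟩ • w.2.2)⟩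

/-- The data `X̃(f₁,f₂,f₃,f₄)` on `⨆ (G l × M)`. -/
def quadExt (D : MCQData Λ G) {R : Type w} [Ring R]
    (f₁ f₂ : (Σ l, G l) → (Σ l, G l) → R) (f₃ f₄ : ∀ l : Λ, G l → G l → R)
    (M : Type x) [AddCommGroup M] [Module R M] : MCQData Λ (fun l => G l × M) where
  mul := quadMul D f₃ f₄ M
  one l := (D.one l, 0)
  inv l p := (D.inv l p.1, -((f₄ l (D.inv l p.1) (D.one l) * f₃ l p.1 (D.inv l p.1)) • p.2))
  op := quadOp D f₁ f₂ M

/-- The multiplication `(a,u)(b,v) = (ab, u + f₁(a,a⁻¹)v)` on `G l × M`. -/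
def alexMul (D : MCQData Λ G) {R : Type w} [Ring R]
    (f₁ : (Σ l, G l) → (Σ l, G l) → R) (M : Type x) [AddCommGroup M] [Module R M]
    (l : Λ) (p q : G l × M) : G l × M :=
  (D.mul l p.1 q.1, p.2 + f₁ ⟨l, p.1⟩ ⟨l, D.inv l p.1⟩ • q.2)

/-- The data `X̃(f₁,f₂)` on `⨆ (G l × M)`, with identity `(e_l, 0)` and
inverse `(a,u)⁻¹ = (a⁻¹, -f₁(a,a)u)` on each component. -/
def alexExt (D : MCQData Λ G) {R : Type w} [Ring R]
    (f₁ f₂ : (Σ l, G l) → (Σ l, G l) → R) (M : Type x) [AddCommGroup M] [Module R M] :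
    MCQData Λ (fun l => G l × M) where
  mul := alexMul D f₁ M
  one l := (D.one l, 0)
  inv l p := (D.inv l p.1, -(f₁ ⟨l, p.1⟩ ⟨l, p.1⟩ • p.2))
  op := quadOp D f₁ f₂ M

/-- `(m, o, i)` satisfies the group axioms on `α`. -/
def GroupAxiomsOn {α : Type x} (m : α → α → α) (o : α) (i : α → α) : Prop :=
  (∀ a b c : α, m (m a b) c = m a (m b c)) ∧ (∀ a : α, m o a = a) ∧ (∀ a : α, m a o = a) ∧
  (∀ a : α, m (i a) a = o) ∧ (∀ a : α, m a (i a) = o)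

/-- The relation `(f₁,f₂,f₃,f₄) ∼ (g₁,g₂,g₃,g₄)`, witnessed by a map `h : X → Rˣ`. -/
def QuadRel (D : MCQData Λ G) {R : Type w} [Ring R]
    (f₁ f₂ g₁ g₂ : (Σ l, G l) → (Σ l, G l) → R)
    (f₃ f₄ g₃ g₄ : ∀ l : Λ, G l → G l → R) : Prop :=
  ∃ h : (Σ l, G l) → Rˣ,
    (∀ x y : Σ l, G l, (h (D.op x y) : R) * f₁ x y = g₁ x y * (h x : R)) ∧
    (∀ x y : Σ l, G l, (h (D.op x y) : R) * f₂ x y = g₂ x y * (h y : R)) ∧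
    (∀ (l : Λ) (a b : G l),
      (h ⟨l, D.mul l a b⟩ : R) * f₃ l a b = g₃ l a b * (h ⟨l, a⟩ : R)) ∧
    (∀ (l : Λ) (a b : G l),
      (h ⟨l, D.mul l a b⟩ : R) * f₄ l a b = g₄ l a b * (h ⟨l, b⟩ : R))

end MCQData

/-!
Every axiom of `X̃(f₁,f₂)` holds in the first coordinate because it holds in `X`, so only the
`M`-coordinate needs checking, and there each axiom is an identity between `R`-linear
combinations of elements of `M`. These identities are the Alexander-pair conditions, once one
knows that `f₁ a x` depends only on the component of `a`, that `a ↦ f₁ a a⁻¹` is multiplicative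
on each `G λ` and that `f₂ (x ◁ a) b = f₂ x (ab) · f₁ a a⁻¹`. Every fibre of the projection is
a copy of `M`.
-/

namespace MCQData

variable {Λ : Type u} {G : Λ → Type v} {D : MCQData Λ G}

namespace IsGroupData

abbrev group (hG : D.IsGroupData) (l : Λ) : Group (G l) where
  mul := D.mul l
  mul_assoc := hG.1 l
  one := D.one l
  one_mul := hG.2.1 l
  mul_one := hG.2.2.1 l
  inv := D.inv l
  inv_mul_cancel := hG.2.2.2.1 l

variable {l : Λ}

theorem mul_assoc (hG : D.IsGroupData) (a b c : G l) :
    D.mul l (D.mul l a b) c = D.mul l a (D.mul l b c) := hG.1 l a b c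

theorem one_mul (hG : D.IsGroupData) (a : G l) : D.mul l (D.one l) a = a := hG.2.1 l a

theorem mul_one (hG : D.IsGroupData) (a : G l) : D.mul l a (D.one l) = a := hG.2.2.1 l a

theorem inv_mul_cancel (hG : D.IsGroupData) (a : G l) : D.mul l (D.inv l a) a = D.one l :=
  hG.2.2.2.1 l a

theorem mul_inv_cancel (hG : D.IsGroupData) (a : G l) : D.mul l a (D.inv l a) = D.one l :=
  hG.2.2.2.2 l a

theorem inv_one (hG : D.IsGroupData) : D.inv l (D.one l) = D.one l := by
  let := hG.group l; exact _root_.inv_one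

theorem inv_inv (hG : D.IsGroupData) (a : G l) : D.inv l (D.inv l a) = a := by
  let := hG.group l; exact _root_.inv_inv a

theorem mul_inv_rev (hG : D.IsGroupData) (a b : G l) :
    D.inv l (D.mul l a b) = D.mul l (D.inv l b) (D.inv l a) := by
  let := hG.group l; exact _root_.mul_inv_rev a b

theorem eq_inv_of_mul_eq_one (hG : D.IsGroupData) {a b : G l} (h : D.mul l a b = D.one l) :
    b = D.inv l a := by
  let := hG.group l; exact eq_inv_of_mul_eq_one_right h

theorem eq_one_of_mul_self (hG : D.IsGroupData) {a : G l} (h : D.mul l a a = a) :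
    a = D.one l := by
  let := hG.group l; exact mul_eq_left.mp h

end IsGroupData

namespace IsMCQ

theorem isGroupData (hD : D.IsMCQ) : D.IsGroupData := hD.1

theorem op_mk_mk {l : Λ} (hD : D.IsMCQ) (a b : G l) :
    D.op ⟨l, a⟩ ⟨l, b⟩ = ⟨l, D.mul l (D.mul l (D.inv l b) a) b⟩ :=
  hD.2.1 l a b

theorem op_one (hD : D.IsMCQ) (x : Σ l, G l) {l : Λ} : D.op x ⟨l, D.one l⟩ = x := hD.2.2.1 x _

theorem op_mul {l : Λ} (hD : D.IsMCQ) (x : Σ l, G l) (a b : G l) :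
    D.op x ⟨l, D.mul l a b⟩ = D.op (D.op x ⟨l, a⟩) ⟨l, b⟩ := hD.2.2.2.1 x l a b

theorem op_op (hD : D.IsMCQ) (x y z : Σ l, G l) : D.op (D.op x y) z = D.op (D.op x z) (D.op y z) :=
  hD.2.2.2.2.1 x y z

theorem exists_mul_op {l : Λ} (hD : D.IsMCQ) (a b : G l) (x : Σ l, G l) :
    ∃ (m : Λ) (a' b' : G m),
      D.op ⟨l, a⟩ x = ⟨m, a'⟩ ∧ D.op ⟨l, b⟩ x = ⟨m, b'⟩ ∧
      D.op ⟨l, D.mul l a b⟩ x = ⟨m, D.mul m a' b'⟩ :=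
  hD.2.2.2.2.2 l a b x

theorem exists_one_op (hD : D.IsMCQ) (l : Λ) (x : Σ l, G l) :
    ∃ m : Λ, D.op ⟨l, D.one l⟩ x = ⟨m, D.one m⟩ := by
  obtain ⟨m, a, b, ha, hb, hab⟩ := hD.exists_mul_op (D.one l) (D.one l) x
  obtain rfl : a = b := sigma_mk_injective (ha.symm.trans hb)
  rw [hD.isGroupData.one_mul, ha] at hab
  have ha_one : a = D.one m := hD.isGroupData.eq_one_of_mul_self (sigma_mk_injective hab).symm
  exact ⟨m, ha_one ▸ ha⟩

theorem inv_op {l : Λ} (hD : D.IsMCQ) {a : G l} {x : Σ l, G l} {m : Λ} {a' : G m}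
    (h : D.op ⟨l, a⟩ x = ⟨m, a'⟩) :
    D.op ⟨l, D.inv l a⟩ x = ⟨m, D.inv m a'⟩ := by
  obtain ⟨n, p, q, hp, hq, hpq⟩ := hD.exists_mul_op a (D.inv l a) x
  obtain ⟨k, hk⟩ := hD.exists_one_op l x
  rw [hD.isGroupData.mul_inv_cancel, hk] at hpq
  obtain ⟨rfl, hpq⟩ := Sigma.mk.inj_iff.mp hpq
  obtain ⟨rfl, hp⟩ := Sigma.mk.inj_iff.mp (h.symm.trans hp)
  rw [hq, eq_of_heq hp, hD.isGroupData.eq_inv_of_mul_eq_one (eq_of_heq hpq).symm]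

end IsMCQ

namespace IsMCQAlexanderPair

variable {R : Type w} [Ring R] {f₁ f₂ : (Σ l, G l) → (Σ l, G l) → R} {l : Λ}

theorem f₁_add_f₂ (hf : D.IsMCQAlexanderPair f₁ f₂) (a b : G l) :
    f₁ ⟨l, a⟩ ⟨l, b⟩ + f₂ ⟨l, a⟩ ⟨l, b⟩ = f₁ ⟨l, a⟩ ⟨l, D.mul l (D.inv l a) b⟩ :=
  hf.1 l a b

theorem f₁_congr_left (hf : D.IsMCQAlexanderPair f₁ f₂) (a b : G l) (x : Σ l, G l) :
    f₁ ⟨l, a⟩ x = f₁ ⟨l, b⟩ x :=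
  hf.2.1 l a b x

theorem f₂_mul_left (hf : D.IsMCQAlexanderPair f₁ f₂) (a b : G l) (x : Σ l, G l) :
    f₂ ⟨l, D.mul l a b⟩ x =
      f₂ ⟨l, a⟩ x + f₁ (D.op ⟨l, b⟩ x) (D.op ⟨l, D.inv l a⟩ x) * f₂ ⟨l, b⟩ x :=
  hf.2.2.1 l a b x

theorem f₁_one (hf : D.IsMCQAlexanderPair f₁ f₂) (x : Σ l, G l) : f₁ x ⟨l, D.one l⟩ = 1 :=
  hf.2.2.2.1 x l

theorem f₁_mul_right (hf : D.IsMCQAlexanderPair f₁ f₂) (x : Σ l, G l) (a b : G l) :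
    f₁ x ⟨l, D.mul l a b⟩ = f₁ (D.op x ⟨l, a⟩) ⟨l, b⟩ * f₁ x ⟨l, a⟩ :=
  hf.2.2.2.2.1 x l a b

theorem f₂_mul_right (hf : D.IsMCQAlexanderPair f₁ f₂) (x : Σ l, G l) (a b : G l) :
    f₂ x ⟨l, D.mul l a b⟩ = f₁ (D.op x ⟨l, a⟩) ⟨l, b⟩ * f₂ x ⟨l, a⟩ :=
  hf.2.2.2.2.2.1 x l a b

theorem f₁_op_mul_f₁ (hf : D.IsMCQAlexanderPair f₁ f₂) (x y z : Σ l, G l) :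
    f₁ (D.op x y) z * f₁ x y = f₁ (D.op x z) (D.op y z) * f₁ x z :=
  hf.2.2.2.2.2.2.1 x y z

theorem f₁_op_mul_f₂ (hf : D.IsMCQAlexanderPair f₁ f₂) (x y z : Σ l, G l) :
    f₁ (D.op x y) z * f₂ x y = f₂ (D.op x z) (D.op y z) * f₁ y z :=
  hf.2.2.2.2.2.2.2.1 x y z

theorem f₂_op_left (hf : D.IsMCQAlexanderPair f₁ f₂) (x y z : Σ l, G l) :
    f₂ (D.op x y) z = f₁ (D.op x z) (D.op y z) * f₂ x z + f₂ (D.op x z) (D.op y z) * f₂ y z :=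
  hf.2.2.2.2.2.2.2.2 x y z

theorem f₁_mk_mul (hD : D.IsMCQ) (hf : D.IsMCQAlexanderPair f₁ f₂) (c a b : G l) :
    f₁ ⟨l, c⟩ ⟨l, D.mul l a b⟩ = f₁ ⟨l, c⟩ ⟨l, b⟩ * f₁ ⟨l, c⟩ ⟨l, a⟩ := by
  rw [hf.f₁_mul_right, hD.op_mk_mk, hf.f₁_congr_left _ c]

theorem f₁_inv_right_mul (hD : D.IsMCQ) (hf : D.IsMCQAlexanderPair f₁ f₂) (a b : G l) :
    f₁ ⟨l, D.mul l a b⟩ ⟨l, D.inv l (D.mul l a b)⟩ =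
      f₁ ⟨l, a⟩ ⟨l, D.inv l a⟩ * f₁ ⟨l, b⟩ ⟨l, D.inv l b⟩ := by
  rw [hD.isGroupData.mul_inv_rev, hf.f₁_mk_mul hD, hf.f₁_congr_left (D.mul l a b) a,
    hf.f₁_congr_left (D.mul l a b) b]

theorem f₁_inv_right_mul_f₁_self (hD : D.IsMCQ) (hf : D.IsMCQAlexanderPair f₁ f₂) (a : G l) :
    f₁ ⟨l, a⟩ ⟨l, D.inv l a⟩ * f₁ ⟨l, a⟩ ⟨l, a⟩ = 1 := by
  rw [← hf.f₁_mk_mul hD, hD.isGroupData.mul_inv_cancel, hf.f₁_one]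

theorem f₁_mul_f₁_inv_right_of_op_eq (hD : D.IsMCQ) (hf : D.IsMCQAlexanderPair f₁ f₂) (a : G l)
    {x : Σ l, G l} {m : Λ} {a' : G m} (h : D.op ⟨l, a⟩ x = ⟨m, a'⟩) :
    f₁ ⟨l, a⟩ x * f₁ ⟨l, a⟩ ⟨l, D.inv l a⟩ = f₁ ⟨m, a'⟩ ⟨m, D.inv m a'⟩ * f₁ ⟨l, a⟩ x := by
  have h4 := hf.f₁_op_mul_f₁ ⟨l, a⟩ ⟨l, D.inv l a⟩ x
  rwa [h, hD.inv_op h, hD.op_mk_mk, hf.f₁_congr_left _ a] at h4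

theorem f₂_eq_f₁_mul_f₂_one (hD : D.IsMCQ) (hf : D.IsMCQAlexanderPair f₁ f₂)
    (x : Σ l, G l) (c : G l) : f₂ x ⟨l, c⟩ = f₁ x ⟨l, c⟩ * f₂ x ⟨l, D.one l⟩ := by
  have h := hf.f₂_mul_right x (D.one l) c
  rwa [hD.isGroupData.one_mul, hD.op_one] at h

theorem one_add_f₂_one (hD : D.IsMCQ) (hf : D.IsMCQAlexanderPair f₁ f₂) (a : G l) :
    1 + f₂ ⟨l, a⟩ ⟨l, D.one l⟩ = f₁ ⟨l, a⟩ ⟨l, D.inv l a⟩ := by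
  have h := hf.f₁_add_f₂ a (D.one l)
  rwa [hD.isGroupData.mul_one, hf.f₁_one] at h

theorem f₂_op_one (hD : D.IsMCQ) (hf : D.IsMCQAlexanderPair f₁ f₂) (x : Σ l, G l) (a : G l) :
    f₂ (D.op x ⟨l, a⟩) ⟨l, D.one l⟩ =
      f₁ x ⟨l, a⟩ * f₂ x ⟨l, D.one l⟩ * f₁ ⟨l, a⟩ ⟨l, D.inv l a⟩ := by
  rw [hf.f₂_op_left, hD.op_one, hD.op_one, hf.f₂_eq_f₁_mul_f₂_one hD x a,
    ← hf.one_add_f₂_one hD, mul_add, mul_one, mul_assoc]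

theorem f₂_mul_right_mul_f₁_inv_right (hD : D.IsMCQ) (hf : D.IsMCQAlexanderPair f₁ f₂)
    (x : Σ l, G l) (a b : G l) :
    f₂ x ⟨l, D.mul l a b⟩ * f₁ ⟨l, a⟩ ⟨l, D.inv l a⟩ = f₂ (D.op x ⟨l, a⟩) ⟨l, b⟩ := by
  rw [hf.f₂_eq_f₁_mul_f₂_one hD (D.op x _), hf.f₂_op_one hD, hf.f₂_eq_f₁_mul_f₂_one hD x,
    hf.f₁_mul_right]
  noncomm_ring

end IsMCQAlexanderPair

def proj (M : Type x) (z : Σ l, G l × M) : Σ l, G l := ⟨z.1, z.2.1⟩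

theorem eq_of_proj_eq {M : Type x} {z w : Σ l, G l × M} (h : proj M z = proj M w)
    (h' : z.2.2 = w.2.2) : z = w := by
  obtain ⟨l, a, u⟩ := z
  obtain ⟨m, b, v⟩ := w
  cases h
  cases h'
  rfl

section AlexExt

variable {R : Type w} [Ring R] {f₁ f₂ : (Σ l, G l) → (Σ l, G l) → R}
  (M : Type x) [AddCommGroup M] [Module R M] {l : Λ}

theorem alexExt_op_mk_mk (hD : D.IsMCQ) (hf : D.IsMCQAlexanderPair f₁ f₂) (p q : G l × M) :
    (alexExt D f₁ f₂ M).op ⟨l, p⟩ ⟨l, q⟩ =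
      ⟨l, (alexExt D f₁ f₂ M).mul l
        ((alexExt D f₁ f₂ M).mul l ((alexExt D f₁ f₂ M).inv l q) p) q⟩ := by
  refine eq_of_proj_eq (hD.op_mk_mk p.1 q.1) ?_
  obtain ⟨a, u⟩ := p
  obtain ⟨b, v⟩ := q
  have key : f₁ ⟨l, D.mul l (D.inv l b) a⟩ ⟨l, D.inv l (D.mul l (D.inv l b) a)⟩ =
      f₁ ⟨l, a⟩ ⟨l, b⟩ + f₂ ⟨l, a⟩ ⟨l, b⟩ := by
    rw [hf.f₁_add_f₂, hD.isGroupData.mul_inv_rev, hD.isGroupData.inv_inv, hf.f₁_congr_left _ a]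
  simp only [alexExt, alexMul, quadOp]
  rw [key, hf.f₁_congr_left b a, hf.f₁_congr_left (D.inv l b) a, hD.isGroupData.inv_inv, add_smul]
  abel

theorem alexExt_op_one (hD : D.IsMCQ) (hf : D.IsMCQAlexanderPair f₁ f₂) (z : Σ l, G l × M) :
    (alexExt D f₁ f₂ M).op z ⟨l, (alexExt D f₁ f₂ M).one l⟩ = z := by
  refine eq_of_proj_eq (hD.op_one (proj M z)) ?_
  simp only [alexExt, quadOp]
  rw [hf.f₁_one, one_smul, smul_zero, add_zero]

theorem alexExt_op_mul (hD : D.IsMCQ) (hf : D.IsMCQAlexanderPair f₁ f₂) (z : Σ l, G l × M)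
    (p q : G l × M) :
    (alexExt D f₁ f₂ M).op z ⟨l, (alexExt D f₁ f₂ M).mul l p q⟩ =
      (alexExt D f₁ f₂ M).op ((alexExt D f₁ f₂ M).op z ⟨l, p⟩) ⟨l, q⟩ := by
  refine eq_of_proj_eq (hD.op_mul (proj M z) p.1 q.1) ?_
  simp only [alexExt, alexMul, quadOp]
  rw [smul_add, ← mul_smul, hf.f₂_mul_right_mul_f₁_inv_right hD, hf.f₂_mul_right, hf.f₁_mul_right,
    smul_add, mul_smul, mul_smul]
  abel

theorem alexExt_op_op (hD : D.IsMCQ) (hf : D.IsMCQAlexanderPair f₁ f₂) (x y z : Σ l, G l × M) :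
    (alexExt D f₁ f₂ M).op ((alexExt D f₁ f₂ M).op x y) z =
      (alexExt D f₁ f₂ M).op ((alexExt D f₁ f₂ M).op x z) ((alexExt D f₁ f₂ M).op y z) := by
  refine eq_of_proj_eq (hD.op_op (proj M x) (proj M y) (proj M z)) ?_
  obtain ⟨i, a, u⟩ := x
  obtain ⟨j, b, v⟩ := y
  obtain ⟨k, c, w⟩ := z
  simp only [alexExt, quadOp, Sigma.eta]
  set X : Σ l, G l := ⟨i, a⟩
  set Y : Σ l, G l := ⟨j, b⟩
  set Z : Σ l, G l := ⟨k, c⟩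
  rw [smul_add, ← mul_smul, ← mul_smul, hf.f₁_op_mul_f₁ X Y Z, hf.f₁_op_mul_f₂ X Y Z,
    hf.f₂_op_left X Y Z]
  simp only [smul_add, add_smul, mul_smul]
  abel

theorem alexExt_exists_mul_op (hD : D.IsMCQ) (hf : D.IsMCQAlexanderPair f₁ f₂) (p q : G l × M)
    (z : Σ l, G l × M) : ∃ (m : Λ) (p' q' : G m × M),
      (alexExt D f₁ f₂ M).op ⟨l, p⟩ z = ⟨m, p'⟩ ∧ (alexExt D f₁ f₂ M).op ⟨l, q⟩ z = ⟨m, q'⟩ ∧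
      (alexExt D f₁ f₂ M).op ⟨l, (alexExt D f₁ f₂ M).mul l p q⟩ z =
        ⟨m, (alexExt D f₁ f₂ M).mul m p' q'⟩ := by
  obtain ⟨a, u⟩ := p
  obtain ⟨b, v⟩ := q
  obtain ⟨k, c, w⟩ := z
  set Z : Σ l, G l := ⟨k, c⟩
  obtain ⟨m, a', b', ha, hb, hab⟩ := hD.exists_mul_op a b Z
  refine ⟨m, (a', f₁ ⟨l, a⟩ Z • u + f₂ ⟨l, a⟩ Z • w), (b', f₁ ⟨l, b⟩ Z • v + f₂ ⟨l, b⟩ Z • w),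
    eq_of_proj_eq ha rfl, eq_of_proj_eq hb rfl, eq_of_proj_eq hab ?_⟩
  have hu : f₁ ⟨l, D.mul l a b⟩ Z = f₁ ⟨l, a⟩ Z := hf.f₁_congr_left _ a Z
  have hv : f₁ ⟨l, a⟩ Z * f₁ ⟨l, a⟩ ⟨l, D.inv l a⟩ = f₁ ⟨m, a'⟩ ⟨m, D.inv m a'⟩ * f₁ ⟨l, b⟩ Z := by
    rw [hf.f₁_mul_f₁_inv_right_of_op_eq hD a ha, hf.f₁_congr_left a b Z]
  have hw : f₂ ⟨l, D.mul l a b⟩ Z = f₂ ⟨l, a⟩ Z + f₁ ⟨m, a'⟩ ⟨m, D.inv m a'⟩ * f₂ ⟨l, b⟩ Z := by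
    rw [hf.f₂_mul_left, hb, hD.inv_op ha, hf.f₁_congr_left b' a']
  simp only [alexExt, alexMul, quadOp]
  rw [hu, hw, smul_add, ← mul_smul, hv]
  simp only [smul_add, add_smul, mul_smul]
  abel

theorem alexExt_isGroupData (hD : D.IsMCQ) (hf : D.IsMCQAlexanderPair f₁ f₂) :
    (alexExt D f₁ f₂ M).IsGroupData := by
  have hG := hD.isGroupData
  refine ⟨fun l p q r => Prod.ext (hG.mul_assoc _ _ _) ?_, fun l p => Prod.ext (hG.one_mul _) ?_,
    fun l p => Prod.ext (hG.mul_one _) ?_, fun l p => Prod.ext (hG.inv_mul_cancel _) ?_,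
    fun l p => Prod.ext (hG.mul_inv_cancel _) ?_⟩ <;>
    simp only [alexExt, alexMul]
  · rw [hf.f₁_inv_right_mul hD, mul_smul, smul_add, add_assoc]
  · rw [hG.inv_one, hf.f₁_one, one_smul, zero_add]
  · rw [smul_zero, add_zero]
  · rw [hG.inv_inv, hf.f₁_congr_left (D.inv l p.1) p.1, neg_add_cancel]
  · rw [smul_neg, ← mul_smul, hf.f₁_inv_right_mul_f₁_self hD, one_smul, add_neg_cancel]

theorem alexExt_isMCQ (hD : D.IsMCQ) (hf : D.IsMCQAlexanderPair f₁ f₂) :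
    (alexExt D f₁ f₂ M).IsMCQ :=
  ⟨alexExt_isGroupData M hD hf, fun _ => alexExt_op_mk_mk M hD hf,
    fun z _ => alexExt_op_one M hD hf z, fun z _ => alexExt_op_mul M hD hf z,
    alexExt_op_op M hD hf, fun _ => alexExt_exists_mul_op M hD hf⟩

theorem isMCQHom_alexExt_proj : IsMCQHom (alexExt D f₁ f₂ M) D (proj M) :=
  ⟨fun _ _ => rfl, fun l p q => ⟨l, p.1, q.1, rfl, rfl, rfl⟩⟩

end AlexExt

theorem proj_surjective (M : Type x) [Nonempty M] :
    Function.Surjective (proj M : (Σ l, G l × M) → Σ l, G l) :=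
  fun x => ⟨⟨x.1, x.2, Classical.arbitrary M⟩, rfl⟩

def fiberEquiv (M : Type x) (x : Σ l, G l) : proj M ⁻¹' {x} ≃ M where
  toFun z := z.1.2.2
  invFun u := ⟨⟨x.1, x.2, u⟩, rfl⟩
  left_inv z := Subtype.ext (eq_of_proj_eq z.2.symm rfl)
  right_inv _ := rfl

end MCQData

/-- for an MCQ Alexander pair `(f₁, f₂)` and a left `R`-module `M`,
the MCQ `X̃(f₁,f₂) = ⨆ (G l × M)` is an extension of `X`: the projection is a
surjective MCQ homomorphism whose fibers all have the same cardinality. -/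
theorem alexExt_is_extension {Λ : Type u} {G : Λ → Type v} {R : Type w} [Ring R]
    (D : MCQData Λ G) (hD : D.IsMCQ)
    (f₁ f₂ : (Σ l, G l) → (Σ l, G l) → R) (hf : D.IsMCQAlexanderPair f₁ f₂)
    (M : Type x) [AddCommGroup M] [Module R M] :
    (MCQData.alexExt D f₁ f₂ M).IsMCQ ∧
    MCQData.IsMCQHom (MCQData.alexExt D f₁ f₂ M) D
      (fun z => ⟨z.1, z.2.1⟩) ∧
    Function.Surjective (fun z : Σ l, G l × M => (⟨z.1, z.2.1⟩ : Σ l, G l)) ∧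
    (∀ x y : Σ l, G l,
      Nonempty (((fun z : Σ l, G l × M => (⟨z.1, z.2.1⟩ : Σ l, G l)) ⁻¹' {x}) ≃
        ((fun z : Σ l, G l × M => (⟨z.1, z.2.1⟩ : Σ l, G l)) ⁻¹' {y}))) :=
  ⟨MCQData.alexExt_isMCQ M hD hf, MCQData.isMCQHom_alexExt_proj M, MCQData.proj_surjective M,
    fun x y => ⟨(MCQData.fiberEquiv M x).trans (MCQData.fiberEquiv M y).symm⟩⟩
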